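/- arXiv:2311.14094 — 9 statements merged into one kernel-verified Lean document; each statement's English description precedes it below -/
import Mathlib

section
/- Let μ, k, l ∈ [0,1] with μk + (1-μ)l > 0 and μ(1-k) + (1-μ)(1-l) > 0. Define p0 = (μk(1-k) + (1-μ)l(1-l)) / (μk + (1-μ)l) and p1 = (μ(1-k)² + (1-μ)(1-l)²) / (μ(1-k) + (1-μ)(1-l)). If k ≤ l, then p1 ≥ p0. -/
theorem stmt1 (μ k l : ℝ)
    (hμ : μ ∈ Set.Icc (0:ℝ) 1) (hk : k ∈ Set.Icc (0:ℝ) 1) (hl : l ∈ Set.Icc (0:ℝ) 1)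
    (hd0 : 0 < μ * k + (1 - μ) * l) (hd1 : 0 < μ * (1 - k) + (1 - μ) * (1 - l))
    (hkl : k ≤ l) :
    (μ * k * (1 - k) + (1 - μ) * l * (1 - l)) / (μ * k + (1 - μ) * l)
      ≤ (μ * (1 - k) ^ 2 + (1 - μ) * (1 - l) ^ 2) / (μ * (1 - k) + (1 - μ) * (1 - l)) := by
  obtain ⟨hμ0, hμ1⟩ := hμ
  obtain ⟨hk0, hk1⟩ := hk
  obtain ⟨hl0, hl1⟩ := hl
  rw [div_le_div_iff₀ hd0 hd1]
  nlinarith [mul_nonneg (mul_nonneg hμ0 (sub_nonneg.2 hμ1)) (sq_nonneg (l - k)), sq_nonneg (k - l)]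
end

section
/- The maximum of (1-μ)l² - μk² over all μ, k, l ∈ [0,1] subject to the constraints μk² ≤ (1-μ)l², μk ≥ (1-μ)l, and k ≤ l, equals 3 - 2√2, attained at μ = √2/2, k = √2 - 1, l = 1. -/
theorem stmt2 :
    IsGreatest {x : ℝ | ∃ μ k l : ℝ, μ ∈ Set.Icc (0:ℝ) 1 ∧ k ∈ Set.Icc (0:ℝ) 1 ∧
      l ∈ Set.Icc (0:ℝ) 1 ∧ μ * k ^ 2 ≤ (1 - μ) * l ^ 2 ∧ (1 - μ) * l ≤ μ * k ∧ k ≤ l ∧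
      x = (1 - μ) * l ^ 2 - μ * k ^ 2} (3 - 2 * Real.sqrt 2) ∧
    (1 - Real.sqrt 2 / 2) * 1 ^ 2 - (Real.sqrt 2 / 2) * (Real.sqrt 2 - 1) ^ 2
      = 3 - 2 * Real.sqrt 2 := by
  have hs : Real.sqrt 2 ^ 2 = 2 := Real.sq_sqrt (by norm_num)
  have hs0 : (0:ℝ) ≤ Real.sqrt 2 := Real.sqrt_nonneg 2
  set s := Real.sqrt 2 with hsdef
  have hs1 : (1:ℝ) ≤ s := by nlinarith
  have hs32 : s ≤ 3/2 := by nlinarith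
  refine ⟨⟨⟨s/2, s-1, 1, ?_, ?_, ?_, ?_, ?_, ?_, ?_⟩, ?_⟩, ?_⟩
  · constructor <;> nlinarith
  · constructor <;> nlinarith
  · norm_num
  · nlinarith
  · nlinarith
  · nlinarith
  · nlinarith
  · -- upper bound
    rintro x ⟨μ, k, l, ⟨hμ0, hμ1⟩, ⟨hk0, hk1⟩, ⟨hl0, hl1⟩, h1, h2, h3, rfl⟩
    by_cases hkl : k + l = 0
    · have hk : k = 0 := by linarith
      have hl : l = 0 := by linarith
      subst hk; subst hl
      nlinarith
    · have hkl' : 0 < k + l := lt_of_le_of_ne (by linarith) (Ne.symm hkl)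
      have hA : 0 ≤ (k^2 + l^2) * (μ*(k+l) - l) := by
        have : 0 ≤ μ*(k+l) - l := by nlinarith
        positivity
      have hB : 0 ≤ l * (k - (s-1)*l)^2 := by positivity
      have hC : 0 ≤ (3 - 2*s) * (k+l) * (1 - l^2) := by
        have h1' : (0:ℝ) ≤ 3 - 2*s := by linarith
        have h2' : (0:ℝ) ≤ 1 - l^2 := by nlinarith
        positivity
      have key : 0 ≤ (k+l) * ((3 - 2*s) - ((1-μ)*l^2 - μ*k^2)) := by
        have : (k+l) * ((3 - 2*s) - ((1-μ)*l^2 - μ*k^2))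
            = (k^2 + l^2) * (μ*(k+l) - l) + l * (k - (s-1)*l)^2
              + (3 - 2*s) * (k+l) * (1 - l^2) := by
          linear_combination (-(l^3)) * hs
        rw [this]; linarith
      nlinarith [key, hkl']
  · nlinarith
end

section
/- The maximum of |μ(1-k)k - (1-μ)(1-l)l| over all μ, k, l ∈ [0,1] subject to μk ≤ (1-μ)l, μ(1-k) ≥ (1-μ)(1-l), and k ≤ l, equals 3 - 2√2, attained at μ = √2/2, k = √2 - 1, l = 1. -/
/-! The signed difference f(μ, k, l) = μ(1-k)k - (1-μ)(1-l)l is nondecreasing in μ, so under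
μk ≤ (1-μ)l it is largest at μ = l/(k+l), where (k+l) f = kl(l-k). With c = 3 - 2√2 = (√2-1)²,
c·l(l+k) - k(l-k) = (k - (√2-1)l)² ≥ 0, whence kl(l-k) ≤ c·l²(l+k) ≤ c(k+l). The substitution
(μ, k, l) ↦ (1-μ, 1-l, 1-k) swaps the two constraints and negates f, giving the lower bound -c. -/

open Real Set

noncomputable section

def signedRegret (μ k l : ℝ) : ℝ := μ * (1 - k) * k - (1 - μ) * (1 - l) * l

lemma signedRegret_one_sub (μ k l : ℝ) :
    signedRegret (1 - μ) (1 - l) (1 - k) = -signedRegret μ k l := by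
  unfold signedRegret; ring

lemma three_sub_two_sqrt_two_eq_sq : 3 - 2 * √2 = (√2 - 1) ^ 2 := by
  have h := sq_sqrt (show (0 : ℝ) ≤ 2 by norm_num)
  linear_combination -h

lemma three_sub_two_sqrt_two_nonneg : 0 ≤ 3 - 2 * √2 :=
  three_sub_two_sqrt_two_eq_sq ▸ sq_nonneg _

lemma mul_sub_le_three_sub_two_sqrt_two_mul (k l : ℝ) :
    k * (l - k) ≤ (3 - 2 * √2) * l * (l + k) := by
  have h := sq_sqrt (show (0 : ℝ) ≤ 2 by norm_num)
  have hsq : (3 - 2 * √2) * l * (l + k) - k * (l - k) = (k - (√2 - 1) * l) ^ 2 := by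
    linear_combination (-l ^ 2) * h
  rw [← sub_nonneg, hsq]
  positivity

lemma mul_mul_sub_le_three_sub_two_sqrt_two_mul {k l : ℝ} (hl₀ : 0 ≤ l) (hl₁ : l ≤ 1)
    (hkl : 0 ≤ k + l) : k * l * (l - k) ≤ (3 - 2 * √2) * (k + l) := by
  have hl2 : l ^ 2 ≤ 1 := by nlinarith
  calc k * l * (l - k) = l * (k * (l - k)) := by ring
    _ ≤ l * ((3 - 2 * √2) * l * (l + k)) :=
        mul_le_mul_of_nonneg_left (mul_sub_le_three_sub_two_sqrt_two_mul k l) hl₀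
    _ = (3 - 2 * √2) * (k + l) * l ^ 2 := by ring
    _ ≤ (3 - 2 * √2) * (k + l) := mul_le_of_le_one_right
        (mul_nonneg three_sub_two_sqrt_two_nonneg hkl) hl2

lemma signedRegret_le {μ k l : ℝ} (hk : k ∈ Icc (0 : ℝ) 1) (hl : l ∈ Icc (0 : ℝ) 1)
    (h : μ * k ≤ (1 - μ) * l) : signedRegret μ k l ≤ 3 - 2 * √2 := by
  obtain ⟨hk₀, hk₁⟩ := hk
  obtain ⟨hl₀, hl₁⟩ := hl
  rcases (add_nonneg hk₀ hl₀).eq_or_lt with hkl | hkl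
  · obtain ⟨rfl, rfl⟩ : k = 0 ∧ l = 0 := ⟨by linarith, by linarith⟩
    simpa [signedRegret] using three_sub_two_sqrt_two_nonneg
  have hvar : 0 ≤ k * (1 - k) + l * (1 - l) := by nlinarith
  have hμ : μ * (k + l) ≤ l := by linarith
  refine le_of_mul_le_mul_right ?_ hkl
  calc signedRegret μ k l * (k + l)
        = μ * (k + l) * (k * (1 - k) + l * (1 - l)) - l * (1 - l) * (k + l) := by
          unfold signedRegret; ring
    _ ≤ l * (k * (1 - k) + l * (1 - l)) - l * (1 - l) * (k + l) := by gcongr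
    _ = k * l * (l - k) := by ring
    _ ≤ (3 - 2 * √2) * (k + l) := mul_mul_sub_le_three_sub_two_sqrt_two_mul hl₀ hl₁ hkl.le

lemma signedRegret_attained : signedRegret (√2 / 2) (√2 - 1) 1 = 3 - 2 * √2 := by
  have h := sq_sqrt (show (0 : ℝ) ≤ 2 by norm_num)
  unfold signedRegret
  linear_combination (3 / 2 - √2 / 2) * h

end

theorem stmt3 :
    IsGreatest {x : ℝ | ∃ μ k l : ℝ, μ ∈ Set.Icc (0:ℝ) 1 ∧ k ∈ Set.Icc (0:ℝ) 1 ∧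
      l ∈ Set.Icc (0:ℝ) 1 ∧ μ * k ≤ (1 - μ) * l ∧ (1 - μ) * (1 - l) ≤ μ * (1 - k) ∧
      k ≤ l ∧ x = |μ * (1 - k) * k - (1 - μ) * (1 - l) * l|} (3 - 2 * Real.sqrt 2) ∧
    |Real.sqrt 2 / 2 * (1 - (Real.sqrt 2 - 1)) * (Real.sqrt 2 - 1)
        - (1 - Real.sqrt 2 / 2) * (1 - 1) * 1| = 3 - 2 * Real.sqrt 2 := by
  have hattained : |signedRegret (√2 / 2) (√2 - 1) 1| = 3 - 2 * √2 := by
    rw [signedRegret_attained, abs_of_nonneg three_sub_two_sqrt_two_nonneg]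
  have h2 := sq_sqrt (show (0 : ℝ) ≤ 2 by norm_num)
  have hs₁ : 1 ≤ √2 := by nlinarith [sqrt_nonneg 2]
  have hs₂ : √2 ≤ 2 := by nlinarith [sqrt_nonneg 2]
  refine ⟨⟨⟨√2 / 2, √2 - 1, 1, ⟨by linarith, by linarith⟩, ⟨by linarith, by linarith⟩,
      ⟨zero_le_one, le_rfl⟩, by linear_combination h2 / 2, by nlinarith, by linarith,
      hattained.symm⟩, ?_⟩, hattained⟩
  rintro x ⟨μ, k, l, -, hk, hl, hμk, hμl, -, rfl⟩
  have hk' : 1 - k ∈ Icc (0 : ℝ) 1 := ⟨by linarith [hk.2], by linarith [hk.1]⟩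
  have hl' : 1 - l ∈ Icc (0 : ℝ) 1 := ⟨by linarith [hl.2], by linarith [hl.1]⟩
  have hlower := signedRegret_le (μ := 1 - μ) hl' hk' (by rwa [sub_sub_cancel])
  rw [signedRegret_one_sub] at hlower
  change |signedRegret μ k l| ≤ _
  exact abs_le.2 ⟨by linarith, signedRegret_le hk hl hμk⟩
end

section
/- For any real t ≥ 1, the maximum of (1-μ)l² - tμk² over μ, k, l ∈ [0,1] subject to tμk² ≤ (1-μ)l², tμk ≥ (1-μ)l, and k ≤ l, equals (√(1+1/t) - √(1/t))² = 1 + 2/t - 2√((1/t)(1+1/t)), attained at μ = 1/√(t+1), k = (√(t+1)-1)/t, l = 1. -/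
/-!
Write `s = √(t + 1)`. Multiplying the objective by `tμ` and using `t μ k ≥ (1 - μ) l ≥ 0` gives
`tμ · ((1 - μ) l² - t μ k²) ≤ (1 - μ) l² (tμ - (1 - μ))`, which is at most
`max ((1 - μ)(tμ - (1 - μ))) 0` since `l ≤ 1`. The identity
`(1 - μ)(tμ - (1 - μ)) + (sμ - 1)² = μ (s - 1)²` bounds this by `μ (s - 1)²`, so the objective
never exceeds `(s - 1)² / t`, with equality at `μ = 1/s`, `l = 1` and `k = (s - 1)/t`, where the
constraint `(1 - μ) l ≤ t μ k` is tight.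
-/

open Real

lemma sqrt_sub_sqrt_sq {a b : ℝ} (ha : 0 ≤ a) (hb : 0 ≤ b) :
    (√a - √b) ^ 2 = a + b - 2 * √(b * a) := by
  rw [sqrt_mul hb]
  linear_combination sq_sqrt ha + sq_sqrt hb

lemma sqrt_one_add_inv_sub_sqrt_inv_sq {t : ℝ} (ht : 0 < t) :
    (√(1 + 1 / t) - √(1 / t)) ^ 2 = (√(t + 1) - 1) ^ 2 / t := by
  have h : √(1 + 1 / t) = √(t + 1) / √t := by
    rw [← sqrt_div (by linarith)]
    congr 1
    field_simp
  rw [h, one_div, sqrt_inv, inv_eq_one_div, div_sub_div_same, div_pow, sq_sqrt ht.le]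

lemma one_sub_mul_add_sq_eq {t s : ℝ} (hs : s ^ 2 = t + 1) (μ : ℝ) :
    (1 - μ) * (t * μ - (1 - μ)) + (s * μ - 1) ^ 2 = μ * (s - 1) ^ 2 := by
  linear_combination μ * (μ - 1) * hs

lemma mul_objective_le_max {t μ k l : ℝ} (hμ1 : μ ≤ 1) (hl0 : 0 ≤ l)
    (hl1 : l ≤ 1) (h : (1 - μ) * l ≤ t * μ * k) :
    t * μ * ((1 - μ) * l ^ 2 - t * μ * k ^ 2) ≤ max ((1 - μ) * (t * μ - (1 - μ))) 0 := by
  have hsq : ((1 - μ) * l) ^ 2 ≤ (t * μ * k) ^ 2 :=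
    pow_le_pow_left₀ (by positivity) h 2
  have hl2 : l ^ 2 ≤ 1 := pow_le_one₀ hl0 hl1
  calc t * μ * ((1 - μ) * l ^ 2 - t * μ * k ^ 2)
      ≤ (1 - μ) * (t * μ - (1 - μ)) * l ^ 2 := by nlinarith
    _ ≤ max ((1 - μ) * (t * μ - (1 - μ))) 0 := by
      rcases le_total 0 ((1 - μ) * (t * μ - (1 - μ))) with hc | hc
      · exact le_max_of_le_left (by nlinarith)
      · exact le_max_of_le_right (mul_nonpos_of_nonpos_of_nonneg hc (sq_nonneg l))

lemma objective_le {t s μ k l : ℝ} (ht : 0 < t) (hs : s ^ 2 = t + 1) (hμ0 : 0 ≤ μ)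
    (hμ1 : μ ≤ 1) (hl0 : 0 ≤ l) (hl1 : l ≤ 1) (h : (1 - μ) * l ≤ t * μ * k) :
    (1 - μ) * l ^ 2 - t * μ * k ^ 2 ≤ (s - 1) ^ 2 / t := by
  rcases hμ0.eq_or_lt with rfl | hμ
  · have hl : l = 0 := by linarith
    subst hl
    simpa using div_nonneg (sq_nonneg (s - 1)) ht.le
  rw [le_div_iff₀ ht, ← mul_le_mul_iff_right₀ hμ]
  calc μ * (((1 - μ) * l ^ 2 - t * μ * k ^ 2) * t)
      = t * μ * ((1 - μ) * l ^ 2 - t * μ * k ^ 2) := by ring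
    _ ≤ max ((1 - μ) * (t * μ - (1 - μ))) 0 := mul_objective_le_max hμ1 hl0 hl1 h
    _ ≤ μ * (s - 1) ^ 2 :=
      max_le (by linarith [one_sub_mul_add_sq_eq hs μ, sq_nonneg (s * μ - 1)])
        (mul_nonneg hμ.le (sq_nonneg _))

lemma objective_at_optimum {t s : ℝ} (ht : t ≠ 0) (hs0 : s ≠ 0) (hs : s ^ 2 = t + 1) :
    (1 - 1 / s) * 1 ^ 2 - t * (1 / s) * ((s - 1) / t) ^ 2 = (s - 1) ^ 2 / t := by
  field_simp
  linear_combination (1 - s) * hs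

lemma optimum_feasible {t s : ℝ} (ht : 0 < t) (hs1 : 1 ≤ s) (hst : s - 1 ≤ t) :
    1 / s ∈ Set.Icc (0 : ℝ) 1 ∧ (s - 1) / t ∈ Set.Icc (0 : ℝ) 1 ∧
      t * (1 / s) * ((s - 1) / t) ^ 2 ≤ (1 - 1 / s) * 1 ^ 2 ∧
      (1 - 1 / s) * 1 ≤ t * (1 / s) * ((s - 1) / t) := by
  have hs0 : 0 < s := zero_lt_one.trans_le hs1
  have hk : (s - 1) / t ≤ 1 := (div_le_one ht).2 hst
  have hk0 : 0 ≤ (s - 1) / t := div_nonneg (by linarith) ht.le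
  have htight : t * (1 / s) * ((s - 1) / t) = 1 - 1 / s := by field_simp
  refine ⟨⟨by positivity, (div_le_one hs0).2 hs1⟩, ⟨hk0, hk⟩, ?_, by rw [htight, mul_one]⟩
  calc t * (1 / s) * ((s - 1) / t) ^ 2 = (1 - 1 / s) * ((s - 1) / t) := by rw [← htight]; ring
    _ ≤ (1 - 1 / s) * 1 ^ 2 := by
      rw [one_pow]
      exact mul_le_mul_of_nonneg_left hk (by rw [sub_nonneg, div_le_one hs0]; exact hs1)

theorem stmt4 (t : ℝ) (ht : 1 ≤ t) :
    IsGreatest {x : ℝ | ∃ μ k l : ℝ, μ ∈ Set.Icc (0:ℝ) 1 ∧ k ∈ Set.Icc (0:ℝ) 1 ∧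
      l ∈ Set.Icc (0:ℝ) 1 ∧ t * μ * k ^ 2 ≤ (1 - μ) * l ^ 2 ∧ (1 - μ) * l ≤ t * μ * k ∧
      k ≤ l ∧ x = (1 - μ) * l ^ 2 - t * μ * k ^ 2}
      ((Real.sqrt (1 + 1 / t) - Real.sqrt (1 / t)) ^ 2) ∧
    (Real.sqrt (1 + 1 / t) - Real.sqrt (1 / t)) ^ 2
      = 1 + 2 / t - 2 * Real.sqrt ((1 / t) * (1 + 1 / t)) ∧
    (1 - 1 / Real.sqrt (t + 1)) * 1 ^ 2
        - t * (1 / Real.sqrt (t + 1)) * ((Real.sqrt (t + 1) - 1) / t) ^ 2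
      = (Real.sqrt (1 + 1 / t) - Real.sqrt (1 / t)) ^ 2 := by
  have ht0 : 0 < t := by linarith
  set s := √(t + 1)
  have hs : s ^ 2 = t + 1 := sq_sqrt (by linarith)
  have hs1 : 1 ≤ s := by nlinarith [sqrt_nonneg (t + 1)]
  have hst : s - 1 ≤ t := by nlinarith
  rw [sqrt_one_add_inv_sub_sqrt_inv_sq ht0]
  have hval := objective_at_optimum ht0.ne' (zero_lt_one.trans_le hs1).ne' hs
  obtain ⟨hμ, hk, hgap, htight⟩ := optimum_feasible ht0 hs1 hst
  refine ⟨⟨⟨1 / s, (s - 1) / t, 1, hμ, hk, ⟨zero_le_one, le_rfl⟩, hgap, htight, hk.2,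
    hval.symm⟩, ?_⟩, ?_, hval⟩
  · rintro x ⟨μ, k, l, hμ, -, hl, -, h, -, rfl⟩
    exact objective_le ht0 hs hμ.1 hμ.2 hl.1 hl.2 h
  · rw [← sqrt_one_add_inv_sub_sqrt_inv_sq ht0, sqrt_sub_sqrt_sq (by positivity) (by positivity)]
    ring
end

section
/- For any real t ≥ 1 and any μ, k, l ∈ [0,1], if tμk ≥ (1-μ)l then (1-μ)l² - tμk² ≤ 1 + 2/t - 2√((1/t)(1+1/t)). -/
theorem stmt5 (t μ k l : ℝ) (ht : 1 ≤ t)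
    (hμ : μ ∈ Set.Icc (0:ℝ) 1) (hk : k ∈ Set.Icc (0:ℝ) 1) (hl : l ∈ Set.Icc (0:ℝ) 1)
    (h : (1 - μ) * l ≤ t * μ * k) :
    (1 - μ) * l ^ 2 - t * μ * k ^ 2
      ≤ 1 + 2 / t - 2 * Real.sqrt ((1 / t) * (1 + 1 / t)) := by
  obtain ⟨hμ0, hμ1⟩ := hμ
  obtain ⟨hk0, hk1⟩ := hk
  obtain ⟨hl0, hl1⟩ := hl
  have ht0 : (0:ℝ) < t := lt_of_lt_of_le one_pos ht
  set e := Real.sqrt (1 + t) with hedef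
  have he2 : e ^ 2 = 1 + t := Real.sq_sqrt (by linarith)
  have he0 : (0:ℝ) ≤ e := Real.sqrt_nonneg _
  have he1 : (1:ℝ) ≤ e := by nlinarith [sq_nonneg (e - 1)]
  have hsq : Real.sqrt ((1 / t) * (1 + 1 / t)) = e / t := by
    rw [show (1 / t) * (1 + 1 / t) = (e / t) ^ 2 by
      field_simp
      rw [he2]; ring]
    exact Real.sqrt_sq (by positivity)
  rw [hsq]
  have hrhs : 1 + 2 / t - 2 * (e / t) = (t + 2 - 2 * e) / t := by
    field_simp
  rw [hrhs]
  have he2a : e ^ 2 * μ ^ 2 = (1 + t) * μ ^ 2 := by rw [he2]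
  have he2b : e ^ 2 * μ = (1 + t) * μ := by rw [he2]
  rcases eq_or_lt_of_le hμ0 with hμe | hμp
  · -- μ = 0
    obtain rfl : μ = 0 := hμe.symm
    have hl' : l = 0 := le_antisymm (by nlinarith) hl0
    rw [hl']
    have h0 : (0:ℝ) ≤ t + 2 - 2 * e := by nlinarith [sq_nonneg (e - 1)]
    have := div_nonneg h0 ht0.le
    nlinarith
  · have hx : ((1 - μ) * l) ^ 2 ≤ (t * μ * k) ^ 2 := by
      have h1 : (0:ℝ) ≤ (1 - μ) * l := mul_nonneg (by linarith) hl0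
      nlinarith
    have key : μ * (t * ((1 - μ) * l ^ 2 - t * μ * k ^ 2)) ≤ μ * (t + 2 - 2 * e) := by
      rcases le_total 0 ((1 - μ) * (t * μ - (1 - μ))) with hA | hA
      · nlinarith [sq_nonneg ((1 - μ) - (e - 1) * μ),
          mul_nonneg hA (by nlinarith : (0:ℝ) ≤ 1 - l ^ 2)]
      · nlinarith [mul_nonneg hμp.le (sq_nonneg (e - 1)),
          mul_nonpos_of_nonneg_of_nonpos (sq_nonneg l) hA]
    have h2 : t * ((1 - μ) * l ^ 2 - t * μ * k ^ 2) ≤ t + 2 - 2 * e :=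
      le_of_mul_le_mul_left (by linarith [key]) hμp
    rw [le_div_iff₀ ht0]
    linarith [h2]
end

section
/- For any real t ≥ 1 and any k ∈ [0,1], 2tk(1-k)/(tk+1) ≤ 2(√(1+1/t) - √(1/t))², with equality when k = (√(t+1)-1)/t. -/
/-!
With `u = t k + 1` and `s = √(t + 1)`, the left side equals
`2 (t + 2 - u - s² / u) / t`, and AM-GM `u + s² / u ≥ 2 s` bounds it by `2 (s - 1)² / t`,
with equality at `u = s`. Finally `√(1 + 1/t) - √(1/t) = (s - 1) / √t`.
-/

namespace Real

theorem sqrt_one_add_inv_sub_sqrt_inv_sq {t : ℝ} (ht : 0 < t) :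
    (√(1 + 1 / t) - √(1 / t)) ^ 2 = (√(t + 1) - 1) ^ 2 / t := by
  have hdiv : √(1 + 1 / t) - √(1 / t) = (√(t + 1) - 1) / √t := by
    rw [show 1 + 1 / t = (t + 1) / t by field_simp, sqrt_div' _ ht.le, sqrt_div' _ ht.le,
      sqrt_one, sub_div]
  rw [hdiv, div_pow, sq_sqrt ht.le]

theorem mul_mul_one_sub_div_le {t k : ℝ} (ht : 0 < t) (hu : 0 < t * k + 1) :
    t * k * (1 - k) / (t * k + 1) ≤ (√(t + 1) - 1) ^ 2 / t := by
  have hs : √(t + 1) ^ 2 = t + 1 := sq_sqrt (by linarith)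
  rw [div_le_div_iff₀ hu ht]
  nlinarith [sq_nonneg (t * k + 1 - √(t + 1))]

theorem mul_mul_one_sub_div_eq_at_optimum {t : ℝ} (ht : 0 < t) :
    t * ((√(t + 1) - 1) / t) * (1 - (√(t + 1) - 1) / t) / (t * ((√(t + 1) - 1) / t) + 1) =
      (√(t + 1) - 1) ^ 2 / t := by
  have hs : √(t + 1) ^ 2 = t + 1 := sq_sqrt (by linarith)
  have hs0 : 0 < √(t + 1) := sqrt_pos.2 (by linarith)
  have hu : t * ((√(t + 1) - 1) / t) + 1 = √(t + 1) := by field_simp; ring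
  rw [hu]
  field_simp
  nlinarith

end Real

theorem stmt6 (t : ℝ) (ht : 1 ≤ t) :
    (∀ k : ℝ, k ∈ Set.Icc (0:ℝ) 1 →
      2 * t * k * (1 - k) / (t * k + 1)
        ≤ 2 * (Real.sqrt (1 + 1 / t) - Real.sqrt (1 / t)) ^ 2) ∧
    2 * t * ((Real.sqrt (t + 1) - 1) / t) * (1 - (Real.sqrt (t + 1) - 1) / t)
        / (t * ((Real.sqrt (t + 1) - 1) / t) + 1)
      = 2 * (Real.sqrt (1 + 1 / t) - Real.sqrt (1 / t)) ^ 2 := by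
  have ht0 : 0 < t := by linarith
  have hdouble (k : ℝ) :
      2 * t * k * (1 - k) / (t * k + 1) = 2 * (t * k * (1 - k) / (t * k + 1)) := by
    ring
  rw [Real.sqrt_one_add_inv_sub_sqrt_inv_sq ht0]
  refine ⟨fun k ⟨hk0, _⟩ => ?_, ?_⟩
  · rw [hdouble]
    have hu : 0 < t * k + 1 := by positivity
    linarith [Real.mul_mul_one_sub_div_le ht0 hu]
  · rw [hdouble, Real.mul_mul_one_sub_div_eq_at_optimum ht0]
end

section
/- Let μ, k₁, k₂, l₁, l₂ ∈ (0,1), μ ∈ (0,1). Define p1⁺ + p2⁺ - 1 and p1⁻ + p2⁻ - 1 as in the threshold-aggregator analysis, where p1⁻ = (μ(1-k₁)(1-k₂) + (1-μ)(1-l₁)(1-l₂)) / (μ(1-k₁) + (1-μ)(1-l₁)) and p2⁻ = (μ(1-k₁)k₂ + (1-μ)(1-l₁)l₂) / (μk₂ + (1-μ)l₂). Then (p1⁺ + p2⁺ - 1)(p1⁻ + p2⁻ - 1) ≥ 0. -/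
theorem stmt8 (μ k₁ k₂ l₁ l₂ : ℝ)
    (hμ : μ ∈ Set.Ioo (0:ℝ) 1) (hk₁ : k₁ ∈ Set.Ioo (0:ℝ) 1) (hk₂ : k₂ ∈ Set.Ioo (0:ℝ) 1)
    (hl₁ : l₁ ∈ Set.Ioo (0:ℝ) 1) (hl₂ : l₂ ∈ Set.Ioo (0:ℝ) 1) :
    0 ≤ ((μ * k₁ * (1 - k₂) + (1 - μ) * l₁ * (1 - l₂)) / (μ * k₁ + (1 - μ) * l₁)
          + (μ * (1 - k₁) * (1 - k₂) + (1 - μ) * (1 - l₁) * (1 - l₂))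
              / (μ * (1 - k₂) + (1 - μ) * (1 - l₂)) - 1)
        * ((μ * (1 - k₁) * (1 - k₂) + (1 - μ) * (1 - l₁) * (1 - l₂))
              / (μ * (1 - k₁) + (1 - μ) * (1 - l₁))
          + (μ * (1 - k₁) * k₂ + (1 - μ) * (1 - l₁) * l₂) / (μ * k₂ + (1 - μ) * l₂)
          - 1) := by
  obtain ⟨hμ0, hμ1⟩ := hμ
  obtain ⟨hk₁0, hk₁1⟩ := hk₁
  obtain ⟨hk₂0, hk₂1⟩ := hk₂
  obtain ⟨hl₁0, hl₁1⟩ := hl₁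
  obtain ⟨hl₂0, hl₂1⟩ := hl₂
  have hμ' : (0:ℝ) < 1 - μ := by linarith
  have hk₁' : (0:ℝ) < 1 - k₁ := by linarith
  have hk₂' : (0:ℝ) < 1 - k₂ := by linarith
  have hl₁' : (0:ℝ) < 1 - l₁ := by linarith
  have hl₂' : (0:ℝ) < 1 - l₂ := by linarith
  have hD1 : (0:ℝ) < μ * k₁ + (1 - μ) * l₁ := by positivity
  have hD2 : (0:ℝ) < μ * (1 - k₂) + (1 - μ) * (1 - l₂) := by positivity
  have hD3 : (0:ℝ) < μ * (1 - k₁) + (1 - μ) * (1 - l₁) := by positivity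
  have hD4 : (0:ℝ) < μ * k₂ + (1 - μ) * l₂ := by positivity
  set C : ℝ := (1 - l₁ - l₂) * (1 - μ) + (1 - k₁ - k₂) * μ with hC
  have hN1 : (0:ℝ) ≤ μ * k₁ * (1 - k₂) + (1 - μ) * l₁ * (1 - l₂) := by positivity
  have hN4 : (0:ℝ) ≤ μ * (1 - k₁) * k₂ + (1 - μ) * (1 - l₁) * l₂ := by positivity
  have h1 : (μ * k₁ * (1 - k₂) + (1 - μ) * l₁ * (1 - l₂)) / (μ * k₁ + (1 - μ) * l₁)
          + (μ * (1 - k₁) * (1 - k₂) + (1 - μ) * (1 - l₁) * (1 - l₂))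
              / (μ * (1 - k₂) + (1 - μ) * (1 - l₂)) - 1
      = C * (μ * k₁ * (1 - k₂) + (1 - μ) * l₁ * (1 - l₂))
          / ((μ * k₁ + (1 - μ) * l₁) * (μ * (1 - k₂) + (1 - μ) * (1 - l₂))) := by
    field_simp
    ring
  have h2 : (μ * (1 - k₁) * (1 - k₂) + (1 - μ) * (1 - l₁) * (1 - l₂))
              / (μ * (1 - k₁) + (1 - μ) * (1 - l₁))
          + (μ * (1 - k₁) * k₂ + (1 - μ) * (1 - l₁) * l₂) / (μ * k₂ + (1 - μ) * l₂) - 1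
      = C * (μ * (1 - k₁) * k₂ + (1 - μ) * (1 - l₁) * l₂)
          / ((μ * (1 - k₁) + (1 - μ) * (1 - l₁)) * (μ * k₂ + (1 - μ) * l₂)) := by
    field_simp
    ring
  rw [h1, h2]
  rw [div_mul_div_comm]
  apply div_nonneg
  · have : C * (μ * k₁ * (1 - k₂) + (1 - μ) * l₁ * (1 - l₂))
        * (C * (μ * (1 - k₁) * k₂ + (1 - μ) * (1 - l₁) * l₂))
      = C ^ 2 * ((μ * k₁ * (1 - k₂) + (1 - μ) * l₁ * (1 - l₂))
        * (μ * (1 - k₁) * k₂ + (1 - μ) * (1 - l₁) * l₂)) := by ring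
    rw [this]
    positivity
  · positivity
end

section
/- The maximum of -μk₁k₂ + (1-μ)l₁l₂ over μ, k₁, k₂, l₁, l₂ ∈ [0,1] subject to μk₁k₂ ≤ (1-μ)l₁l₂, μk₁ ≥ (1-μ)l₁, μk₂ ≥ (1-μ)l₂, k₁ ≤ l₁, k₂ ≤ l₂, equals 3 - 2√2, attained at μ = √2/2, k₁ = k₂ = √2 - 1, l₁ = l₂ = 1. -/
set_option maxHeartbeats 1000000

theorem stmt9 :
    IsGreatest {x : ℝ | ∃ μ k₁ k₂ l₁ l₂ : ℝ, μ ∈ Set.Icc (0:ℝ) 1 ∧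
      k₁ ∈ Set.Icc (0:ℝ) 1 ∧ k₂ ∈ Set.Icc (0:ℝ) 1 ∧ l₁ ∈ Set.Icc (0:ℝ) 1 ∧
      l₂ ∈ Set.Icc (0:ℝ) 1 ∧ μ * k₁ * k₂ ≤ (1 - μ) * l₁ * l₂ ∧
      (1 - μ) * l₁ ≤ μ * k₁ ∧ (1 - μ) * l₂ ≤ μ * k₂ ∧ k₁ ≤ l₁ ∧ k₂ ≤ l₂ ∧
      x = -(μ * k₁ * k₂) + (1 - μ) * l₁ * l₂} (3 - 2 * Real.sqrt 2) ∧
    -(Real.sqrt 2 / 2 * (Real.sqrt 2 - 1) * (Real.sqrt 2 - 1))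
        + (1 - Real.sqrt 2 / 2) * 1 * 1 = 3 - 2 * Real.sqrt 2 := by
  have hs2 : (Real.sqrt 2) ^ 2 = 2 := Real.sq_sqrt (by norm_num)
  have hs0 : (1:ℝ) ≤ Real.sqrt 2 := by nlinarith [Real.sqrt_nonneg 2]
  have hs3 : Real.sqrt 2 ≤ 3/2 := by nlinarith [Real.sqrt_nonneg 2]
  set s := Real.sqrt 2 with hs
  constructor
  · constructor
    · refine ⟨s/2, s-1, s-1, 1, 1, ?_, ?_, ?_, ?_, ?_, ?_, ?_, ?_, ?_, ?_, ?_⟩ <;>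
        first
          | (constructor <;> nlinarith)
          | nlinarith
    · rintro x ⟨μ, k₁, k₂, l₁, l₂, ⟨hμ0, hμ1⟩, ⟨hk₁0, hk₁1⟩, ⟨hk₂0, hk₂1⟩,
        ⟨hl₁0, hl₁1⟩, ⟨hl₂0, hl₂1⟩, hbal, h1, h2, hkl₁, hkl₂, hx⟩
      subst hx
      rcases le_or_gt (2*μ) 1 with hμ | hμ
      · -- l₁ = 0 (or everything degenerates): (1-2μ)l₁ ≤ 0 forces l₁ small
        have hl1 : (1-2*μ)*l₁ ≤ 0 := by nlinarith
        have hl2 : (1-2*μ)*l₂ ≤ 0 := by nlinarith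
        rcases eq_or_lt_of_le hμ with heq | hlt
        · -- μ = 1/2
          nlinarith [mul_nonneg hl₁0 hl₂0, mul_nonneg hk₁0 hk₂0]
        · have hl₁z : l₁ = 0 := by nlinarith
          have hk₁z : k₁ = 0 := le_antisymm (hl₁z ▸ hkl₁) hk₁0
          rw [hl₁z, hk₁z]
          nlinarith
      · have hμpos : 0 < μ := by linarith
        have key1 : μ * (-(μ * k₁ * k₂) + (1 - μ) * l₁ * l₂)
            ≤ (1-μ)*(2*μ-1)*(l₁*l₂) := by
          nlinarith [mul_nonneg hk₂0 (sub_nonneg.2 h1),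
            mul_nonneg hl₁0 (sub_nonneg.2 h2), mul_nonneg hl₁0 hl₂0]
        have key2 : (1-μ)*(2*μ-1)*(l₁*l₂) ≤ (1-μ)*(2*μ-1) := by
          have h0 : 0 ≤ (1-μ)*(2*μ-1) := by nlinarith
          have hll : l₁ * l₂ ≤ 1 := mul_le_one₀ hl₁1 hl₂0 hl₂1
          exact mul_le_of_le_one_right h0 hll
        have e : (s*μ - 1)^2 = 2*μ^2 - 2*s*μ + 1 := by
          have : (s*μ - 1)^2 = s^2*μ^2 - 2*s*μ + 1 := by ring
          rw [this, hs2]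
        have key3 : (1-μ)*(2*μ-1) ≤ μ * (3 - 2*s) := by
          nlinarith [sq_nonneg (s*μ - 1), e]
        have := key1.trans (key2.trans key3)
        exact le_of_mul_le_mul_left (by linarith [this]) hμpos
  · nlinarith
end

section
/- For any real t with 0 < t ≤ 1, the maximum of tμ(1-k)² - (1-μ)(1-l)² over μ, k, l ∈ [0,1] subject to tμ(1-k)² ≥ (1-μ)(1-l)², tμ(1-k) ≤ (1-μ)(1-l), and k ≤ l, equals (√(t+t²) - t)², attained at μ = 1 - √(t/(t+1)), k = 0, l = 1 - √t(√(t+1) - √t). -/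
private lemma stmt12_ub (t r B μ k l x : ℝ) (ht0 : 0 < t)
    (hr2 : r ^ 2 = t) (hB2 : B ^ 2 = t + 1)
    (hμa : 0 ≤ μ) (hμb : μ ≤ 1) (hka : 0 ≤ k) (hkb : k ≤ 1) (hla : 0 ≤ l) (hlb : l ≤ 1)
    (h1 : (1 - μ) * (1 - l) ^ 2 ≤ t * μ * (1 - k) ^ 2)
    (h2 : t * μ * (1 - k) ≤ (1 - μ) * (1 - l)) (h3 : k ≤ l)
    (hx : x = t * μ * (1 - k) ^ 2 - (1 - μ) * (1 - l) ^ 2) :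
    x ≤ (r * B - t) ^ 2 := by
  set c := t * μ * (1 - k) with hcdef
  have hc0 : 0 ≤ c := by
    have h : 0 ≤ t * μ := by positivity
    nlinarith
  have step1 : x ≤ c * l := by
    have h2' : c * (1 - l) ≤ (1 - μ) * (1 - l) ^ 2 := by
      nlinarith [mul_le_mul_of_nonneg_right h2 (by linarith : (0:ℝ) ≤ 1 - l)]
    nlinarith [mul_nonneg hc0 hka]
  have step2 : c * (1 + t - l) ≤ t * (1 - l) := by
    have hcμ : c ≤ t * μ := by nlinarith [mul_nonneg (mul_nonneg ht0.le hμa) hka]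
    nlinarith [mul_le_mul_of_nonneg_right hcμ (by linarith : (0:ℝ) ≤ 1 - l),
      mul_le_mul_of_nonneg_left h2 ht0.le]
  have step3 : t * l * (1 - l) ≤ (r * B - t) ^ 2 * (1 + t - l) := by
    have hAB : (r * B) ^ 2 = t ^ 2 + t := by rw [mul_pow, hr2, hB2]; ring
    have key : (r*B - t)^2 * (1 + t - l) - t * l * (1 - l) = t * (l - (1 + t - r*B))^2 := by
      linear_combination (1 - l) * hAB
    nlinarith [mul_nonneg ht0.le (sq_nonneg (l - (1 + t - r*B)))]
  have step4 : c * l * (1 + t - l) ≤ (r * B - t) ^ 2 * (1 + t - l) := by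
    nlinarith [mul_le_mul_of_nonneg_right step2 hla]
  have hpos : 0 < 1 + t - l := by linarith
  have h6 : c * l ≤ (r * B - t) ^ 2 := le_of_mul_le_mul_right step4 hpos
  linarith

private lemma stmt12_val (t r B : ℝ) (hB0 : 0 < B)
    (hr2 : r ^ 2 = t) (hB2 : B ^ 2 = t + 1) :
    t * (1 - r / B) * (1 - (0:ℝ)) ^ 2
      - (1 - (1 - r / B)) * (1 - (1 - r * (B - r))) ^ 2 = (r * B - t) ^ 2 := by
  field_simp
  linear_combination (2*B*(t+r^2) - r*(t+r^2) - r*(t+1) - B^3) * hr2 + (2*t*r - r^3 - t*B) * hB2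

private lemma stmt12_eqc (t r B : ℝ) (hB0 : 0 < B) (hr2 : r ^ 2 = t) :
    t * (1 - r / B) * (1 - (0:ℝ)) = (1 - (1 - r / B)) * (1 - (1 - r * (B - r))) := by
  field_simp
  linear_combination (r - B) * hr2

private lemma stmt12_mem (t r B : ℝ) (ht0 : 0 < t) (hr0 : 0 < r) (hB0 : 0 < B)
    (hr2 : r ^ 2 = t) (hB2 : B ^ 2 = t + 1) (hrB : r ≤ B) :
    ∃ μ k l : ℝ, μ ∈ Set.Icc (0:ℝ) 1 ∧ k ∈ Set.Icc (0:ℝ) 1 ∧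
      l ∈ Set.Icc (0:ℝ) 1 ∧ (1 - μ) * (1 - l) ^ 2 ≤ t * μ * (1 - k) ^ 2 ∧
      t * μ * (1 - k) ≤ (1 - μ) * (1 - l) ∧ k ≤ l ∧
      (r * B - t) ^ 2 = t * μ * (1 - k) ^ 2 - (1 - μ) * (1 - l) ^ 2 := by
  have heq := stmt12_eqc t r B hB0 hr2
  have hval := stmt12_val t r B hB0 hr2 hB2
  have hl0 : 0 ≤ 1 - r * (B - r) := by nlinarith
  have hl1 : 1 - r * (B - r) ≤ 1 := by nlinarith
  have hμ0 : 0 ≤ 1 - r / B := by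
    rw [sub_nonneg, div_le_one hB0]; exact hrB
  have hμ1 : 1 - r / B ≤ 1 := by
    have : 0 ≤ r / B := by positivity
    linarith
  refine ⟨1 - r / B, 0, 1 - r * (B - r), ⟨hμ0, hμ1⟩, ⟨le_refl 0, zero_le_one⟩,
    ⟨hl0, hl1⟩, ?_, by linarith, hl0, hval.symm⟩
  have hm : 0 ≤ t * (1 - r / B) := by positivity
  nlinarith [heq, mul_nonneg hm (mul_nonneg hr0.le (by linarith : (0:ℝ) ≤ B - r))]

theorem stmt12 (t : ℝ) (ht0 : 0 < t) (ht1 : t ≤ 1) :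
    IsGreatest {x : ℝ | ∃ μ k l : ℝ, μ ∈ Set.Icc (0:ℝ) 1 ∧ k ∈ Set.Icc (0:ℝ) 1 ∧
      l ∈ Set.Icc (0:ℝ) 1 ∧ (1 - μ) * (1 - l) ^ 2 ≤ t * μ * (1 - k) ^ 2 ∧
      t * μ * (1 - k) ≤ (1 - μ) * (1 - l) ∧ k ≤ l ∧
      x = t * μ * (1 - k) ^ 2 - (1 - μ) * (1 - l) ^ 2}
      ((Real.sqrt (t + t ^ 2) - t) ^ 2) ∧
    (let μ := 1 - Real.sqrt (t / (t + 1));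
     let k := (0:ℝ);
     let l := 1 - Real.sqrt t * (Real.sqrt (t + 1) - Real.sqrt t);
     t * μ * (1 - k) ^ 2 - (1 - μ) * (1 - l) ^ 2 = (Real.sqrt (t + t ^ 2) - t) ^ 2) := by
  have ht1' : (0:ℝ) < t + 1 := by linarith
  have hr0 : 0 < Real.sqrt t := Real.sqrt_pos.2 ht0
  have hB0 : 0 < Real.sqrt (t + 1) := Real.sqrt_pos.2 ht1'
  have hr2 : Real.sqrt t ^ 2 = t := Real.sq_sqrt ht0.le
  have hB2 : Real.sqrt (t + 1) ^ 2 = t + 1 := Real.sq_sqrt ht1'.le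
  have hrB : Real.sqrt t ≤ Real.sqrt (t + 1) := Real.sqrt_le_sqrt (by linarith)
  have hA : Real.sqrt (t + t ^ 2) = Real.sqrt t * Real.sqrt (t + 1) := by
    rw [← Real.sqrt_mul ht0.le]
    ring_nf
  have hs : Real.sqrt (t / (t + 1)) = Real.sqrt t / Real.sqrt (t + 1) :=
    Real.sqrt_div ht0.le _
  rw [hA]
  constructor
  · constructor
    · exact stmt12_mem t _ _ ht0 hr0 hB0 hr2 hB2 hrB
    · rintro x ⟨μ, k, l, ⟨hμa, hμb⟩, ⟨hka, hkb⟩, ⟨hla, hlb⟩, h1, h2, h3, hx⟩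
      exact stmt12_ub t _ _ μ k l x ht0 hr2 hB2 hμa hμb hka hkb hla hlb h1 h2 h3 hx
  · intro μ k l
    have := stmt12_val t (Real.sqrt t) (Real.sqrt (t+1)) hB0 hr2 hB2
    simp only [μ, k, l, hs]
    linarith [this]
end
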